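/- arXiv:2305.17505 — 2 statements merged into one kernel-verified Lean document; each statement's English description precedes it below -/
import Mathlib

section
/- For real numbers m_1, …, m_k with each |m_i| < ∞, the quantity ln((1 + ∏_i tanh(m_i/2))/(1 − ∏_i tanh(m_i/2))) has the same sign as ∏_i sign(m_i), and its absolute value is at most min_i |m_i|. -/
open Real Finset

lemma myAbsTanhLtOne (x : ℝ) : |Real.tanh x| < 1 := by
  rw [Real.tanh_eq_sinh_div_cosh, abs_div, abs_of_pos (Real.cosh_pos x),
    div_lt_one (Real.cosh_pos x), abs_lt]
  constructor
  · nlinarith [Real.cosh_add_sinh x, Real.exp_pos x]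
  · nlinarith [Real.cosh_sub_sinh x, Real.exp_pos (-x)]

lemma myLogRatioTanh (x : ℝ) :
    Real.log ((1 + Real.tanh (x / 2)) / (1 - Real.tanh (x / 2))) = x := by
  have hc := Real.cosh_pos (x / 2)
  have key : (1 + Real.tanh (x / 2)) / (1 - Real.tanh (x / 2)) = Real.exp x := by
    rw [Real.tanh_eq_sinh_div_cosh]
    have h1 : 1 + Real.sinh (x/2) / Real.cosh (x/2) = Real.exp (x/2) / Real.cosh (x/2) := by
      rw [eq_div_iff hc.ne', add_mul, one_mul, div_mul_cancel₀ _ hc.ne', Real.cosh_add_sinh]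
    have h2 : 1 - Real.sinh (x/2) / Real.cosh (x/2) = Real.exp (-(x/2)) / Real.cosh (x/2) := by
      rw [eq_div_iff hc.ne', sub_mul, one_mul, div_mul_cancel₀ _ hc.ne', Real.cosh_sub_sinh]
    rw [h1, h2]
    rw [div_div_div_cancel_right₀]
    · rw [← Real.exp_sub]; ring_nf
    · exact hc.ne'
  rw [key, Real.log_exp]

lemma myTanhPos {x : ℝ} (hx : 0 < x) : 0 < Real.tanh x := by
  rw [Real.tanh_eq_sinh_div_cosh]
  exact div_pos (Real.sinh_pos_iff.mpr hx) (Real.cosh_pos x)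

lemma mySignTanhHalf (x : ℝ) : Real.sign (Real.tanh (x / 2)) = Real.sign x := by
  rcases lt_trichotomy x 0 with h | rfl | h
  · have : 0 < Real.tanh (-(x/2)) := myTanhPos (by linarith)
    rw [Real.tanh_neg] at this
    rw [Real.sign_of_neg (by linarith), Real.sign_of_neg h]
  · simp
  · rw [Real.sign_of_pos (myTanhPos (by linarith)), Real.sign_of_pos h]

lemma mySignMul (a b : ℝ) : Real.sign (a * b) = Real.sign a * Real.sign b := by
  rcases lt_trichotomy a 0 with ha | rfl | ha
  · rcases lt_trichotomy b 0 with hb | rfl | hb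
    · rw [Real.sign_of_pos (mul_pos_of_neg_of_neg ha hb), Real.sign_of_neg ha,
        Real.sign_of_neg hb]; norm_num
    · simp
    · rw [Real.sign_of_neg (mul_neg_of_neg_of_pos ha hb), Real.sign_of_neg ha,
        Real.sign_of_pos hb]; norm_num
  · simp
  · rcases lt_trichotomy b 0 with hb | rfl | hb
    · rw [Real.sign_of_neg (mul_neg_of_pos_of_neg ha hb), Real.sign_of_pos ha,
        Real.sign_of_neg hb]; norm_num
    · simp
    · rw [Real.sign_of_pos (mul_pos ha hb), Real.sign_of_pos ha, Real.sign_of_pos hb]; norm_num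

lemma mySignProd {ι : Type*} (s : Finset ι) (f : ι → ℝ) :
    Real.sign (∏ i ∈ s, f i) = ∏ i ∈ s, Real.sign (f i) := by
  induction s using Finset.cons_induction with
  | empty => simp
  | cons a s h ih => rw [Finset.prod_cons, Finset.prod_cons, mySignMul, ih]

lemma myTanhAbs (x : ℝ) : Real.tanh (|x| / 2) = |Real.tanh (x / 2)| := by
  rcases le_or_gt 0 x with h | h
  · rw [abs_of_nonneg h, abs_of_nonneg]
    rcases h.lt_or_eq with h' | rfl
    · exact (myTanhPos (by linarith)).le
    · simp
  · rw [abs_of_neg h, abs_of_neg, ← Real.tanh_neg]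
    · ring_nf
    · have : 0 < Real.tanh (-(x/2)) := myTanhPos (by linarith)
      rw [Real.tanh_neg] at this; linarith

lemma myMono {a b : ℝ} (ha : 0 ≤ a) (hab : a ≤ b) (hb : b < 1) :
    Real.log ((1 + a) / (1 - a)) ≤ Real.log ((1 + b) / (1 - b)) := by
  have h1a : 0 < 1 - a := by linarith
  have h1b : 0 < 1 - b := by linarith
  apply Real.log_le_log (by positivity)
  rw [div_le_div_iff₀ h1a h1b]
  nlinarith

/-- Min-sum approximation bound: for finite reals `m_1, …, m_k` (`k ≥ 1`), the quantity
`L = ln((1 + ∏ tanh(m_i/2))/(1 − ∏ tanh(m_i/2)))` has the same sign as `∏ sign(m_i)` and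
`|L| ≤ min_i |m_i|`. -/
theorem log_ratio_tanh_sign_and_abs_le_min (k : ℕ) (hk : 0 < k) (m : Fin k → ℝ) :
    Real.sign (Real.log ((1 + ∏ i, Real.tanh (m i / 2)) / (1 - ∏ i, Real.tanh (m i / 2))))
        = ∏ i, Real.sign (m i) ∧
      |Real.log ((1 + ∏ i, Real.tanh (m i / 2)) / (1 - ∏ i, Real.tanh (m i / 2)))|
        ≤ Finset.univ.inf'
            (Finset.univ_nonempty_iff.mpr ⟨⟨0, hk⟩⟩) (fun i => |m i|) := by
  set t : Fin k → ℝ := fun i => Real.tanh (m i / 2) with ht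
  set P : ℝ := ∏ i, t i with hP
  have habs : |P| = ∏ i, |t i| := Finset.abs_prod _ _
  have hPle : ∀ j, |P| ≤ |t j| := by
    intro j
    rw [habs, ← Finset.mul_prod_erase _ _ (Finset.mem_univ j)]
    calc |t j| * ∏ i ∈ Finset.univ.erase j, |t i|
        ≤ |t j| * 1 := by
          apply mul_le_mul_of_nonneg_left _ (abs_nonneg _)
          exact Finset.prod_le_one (fun i _ => abs_nonneg _)
            (fun i _ => (myAbsTanhLtOne _).le)
      _ = |t j| := mul_one _
  have hP1 : |P| < 1 := (hPle ⟨0, hk⟩).trans_lt (myAbsTanhLtOne _)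
  have hPlt : -1 < P ∧ P < 1 := abs_lt.mp hP1
  have h1P : 0 < 1 + P := by linarith [hPlt.1]
  have h1P' : 0 < 1 - P := by linarith [hPlt.2]
  set L : ℝ := Real.log ((1 + P) / (1 - P)) with hL
  -- sign
  have hsign : Real.sign L = Real.sign P := by
    rcases lt_trichotomy P 0 with h | h | h
    · rw [Real.sign_of_neg h, Real.sign_of_neg]
      apply Real.log_neg (by positivity)
      rw [div_lt_one h1P']; linarith
    · rw [hL, h]; norm_num
    · rw [Real.sign_of_pos h, Real.sign_of_pos]
      apply Real.log_pos
      rw [lt_div_iff₀ h1P']; linarith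
  have hsigns : Real.sign P = ∏ i, Real.sign (m i) := by
    rw [hP, mySignProd]
    exact Finset.prod_congr rfl fun i _ => mySignTanhHalf (m i)
  refine ⟨hsign.trans hsigns, ?_⟩
  -- abs bound
  have hodd : ∀ a : ℝ, -1 < a → a < 1 →
      Real.log ((1 + -a) / (1 - -a)) = -Real.log ((1 + a) / (1 - a)) := by
    intro a h1 h2
    rw [show (1 + -a) / (1 - -a) = ((1 + a) / (1 - a))⁻¹ by rw [inv_div]; ring_nf,
      Real.log_inv]
  have hLabs : |L| = Real.log ((1 + |P|) / (1 - |P|)) := by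
    rcases le_or_gt 0 P with h | h
    · rw [abs_of_nonneg h, abs_of_nonneg]
      apply Real.log_nonneg
      rw [le_div_iff₀ h1P']; linarith
    · have h2 : L = -Real.log ((1 + -P) / (1 - -P)) := by
        conv_lhs => rw [hL, show P = -(-P) by ring]
        rw [hodd (-P) (by linarith [hPlt.2]) (by linarith)]
      rw [abs_of_neg h, h2, abs_neg, abs_of_nonneg]
      apply Real.log_nonneg
      rw [le_div_iff₀ (by linarith [hPlt.1] : (0:ℝ) < 1 - -P)]; linarith
  apply Finset.le_inf'
  intro j _
  rw [hLabs]
  calc Real.log ((1 + |P|) / (1 - |P|))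
      ≤ Real.log ((1 + |t j|) / (1 - |t j|)) :=
        myMono (abs_nonneg _) (hPle j) (myAbsTanhLtOne _)
    _ = |m j| := by rw [← myTanhAbs, myLogRatioTanh]
end

section
/- Let e_1, …, e_k be independent {0,1}-valued random variables with P(e_i = 1) = p_i and log-likelihood ratios γ_i = ln((1−p_i)/p_i). Then ln(P(⊕_i e_i = 0)/P(⊕_i e_i = 1)) = ln((1 + ∏_i tanh(γ_i/2))/(1 − ∏_i tanh(γ_i/2))). -/
/-! The parity of independent bits is distributed as an iterated convolution on `ZMod 2`, so its
transform under any additive character factorises over the bits. The trivial character gives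
`P(even) + P(odd) = 1`, the sign character gives `P(even) - P(odd) = ∏ (1 - 2 pᵢ)`, and
`γᵢ / 2 = artanh (1 - 2 pᵢ)` identifies each factor `1 - 2 pᵢ` with `tanh (γᵢ / 2)`. -/

open Finset

lemma AddChar.map_sum_eq_prod {A M ι : Type*} [AddCommMonoid A] [CommMonoid M]
    (ψ : AddChar A M) (s : Finset ι) (f : ι → A) :
    ψ (∑ i ∈ s, f i) = ∏ i ∈ s, ψ (f i) := by
  induction s using Finset.cons_induction with
  | empty => simp
  | cons a s _ ih => rw [sum_cons, prod_cons, map_add_eq_mul, ih]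

section IteratedConv

variable {ι G R : Type*} [Fintype ι] [DecidableEq ι] [AddCommMonoid G] [Fintype G] [DecidableEq G]
  [CommSemiring R]

def iteratedConv (f : ι → G → R) (g : G) : R :=
  ∑ v ∈ univ.filter (fun v : ι → G => ∑ i, v i = g), ∏ i, f i (v i)

lemma sum_mul_iteratedConv (f : ι → G → R) (ψ : AddChar G R) :
    ∑ g, ψ g * iteratedConv f g = ∏ i, ∑ x, ψ x * f i x := calc
  ∑ g, ψ g * iteratedConv f g
      = ∑ g, ∑ v ∈ univ.filter (fun v : ι → G => ∑ i, v i = g), ψ (∑ i, v i) * ∏ i, f i (v i) := by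
        refine sum_congr rfl fun g _ ↦ ?_
        rw [iteratedConv, mul_sum]
        exact sum_congr rfl fun v hv ↦ by rw [(mem_filter.1 hv).2]
    _ = ∑ v : ι → G, ψ (∑ i, v i) * ∏ i, f i (v i) := sum_fiberwise _ _ _
    _ = ∑ v : ι → G, ∏ i, ψ (v i) * f i (v i) := by
        simp only [AddChar.map_sum_eq_prod, prod_mul_distrib]
    _ = ∏ i, ∑ x, ψ x * f i x := (Fintype.prod_sum fun i x ↦ ψ x * f i x).symm

end IteratedConv

def paritySign {R : Type*} [Ring R] : AddChar (ZMod 2) R where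
  toFun x := if x = 0 then 1 else -1
  map_zero_eq_one' := if_pos rfl
  map_add_eq_mul' a b := by
    obtain rfl | rfl := (by decide : ∀ x : ZMod 2, x = 0 ∨ x = 1) a <;>
    obtain rfl | rfl := (by decide : ∀ x : ZMod 2, x = 0 ∨ x = 1) b <;>
    simp +decide

lemma ZMod.sum_univ_two {M : Type*} [AddCommMonoid M] (h : ZMod 2 → M) :
    ∑ b, h b = h 0 + h 1 :=
  Fin.sum_univ_two h

section Parity

variable {ι R : Type*} [Fintype ι] [DecidableEq ι]

lemma iteratedConv_zero_add_iteratedConv_one [CommSemiring R] (f : ι → ZMod 2 → R) :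
    iteratedConv f 0 + iteratedConv f 1 = ∏ i, (f i 0 + f i 1) := by
  simpa [ZMod.sum_univ_two] using sum_mul_iteratedConv f 1

lemma iteratedConv_zero_sub_iteratedConv_one [CommRing R] (f : ι → ZMod 2 → R) :
    iteratedConv f 0 - iteratedConv f 1 = ∏ i, (f i 0 - f i 1) := by
  simpa [ZMod.sum_univ_two, paritySign, sub_eq_add_neg] using sum_mul_iteratedConv f paritySign

end Parity

lemma tanh_half_log_one_sub_div {p : ℝ} (hp : p ∈ Set.Ioo 0 1) :
    Real.tanh (Real.log ((1 - p) / p) / 2) = 1 - 2 * p := by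
  obtain ⟨h0, h1⟩ := hp
  have hx : 1 - 2 * p ∈ Set.Icc (-1 : ℝ) 1 := ⟨by linarith, by linarith⟩
  have : Real.log ((1 - p) / p) / 2 = Real.artanh (1 - 2 * p) := by
    rw [Real.artanh_eq_half_log hx, show (1 + (1 - 2 * p)) / (1 - (1 - 2 * p)) = (1 - p) / p by field_simp; ring]
    ring
  rw [this, Real.tanh_artanh ⟨by linarith, by linarith⟩]

/-- For independent bits `e_1, …, e_k` with `P(e_i = 1) = p_i ∈ (0,1)` and log-likelihood
ratios `γ_i = ln((1−p_i)/p_i)`, the log-likelihood ratio of the parity satisfies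
`ln(P(⊕ e_i = 0)/P(⊕ e_i = 1)) = ln((1 + ∏ tanh(γ_i/2))/(1 − ∏ tanh(γ_i/2)))`. -/
theorem parity_llr_eq_log_ratio_tanh (k : ℕ) (p : Fin k → ℝ)
    (hp : ∀ i, p i ∈ Set.Ioo (0 : ℝ) 1) :
    Real.log
        ((∑ v ∈ Finset.univ.filter (fun v : Fin k → ZMod 2 => ∑ i, v i = 0),
            ∏ i, (if v i = 1 then p i else 1 - p i)) /
          (∑ v ∈ Finset.univ.filter (fun v : Fin k → ZMod 2 => ∑ i, v i = 1),
            ∏ i, (if v i = 1 then p i else 1 - p i)))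
      = Real.log
          ((1 + ∏ i, Real.tanh (Real.log ((1 - p i) / p i) / 2)) /
            (1 - ∏ i, Real.tanh (Real.log ((1 - p i) / p i) / 2))) := by
  set f : Fin k → ZMod 2 → ℝ := fun i x ↦ if x = 1 then p i else 1 - p i
  set t := ∏ i, Real.tanh (Real.log ((1 - p i) / p i) / 2)
  have hsum : iteratedConv f 0 + iteratedConv f 1 = 1 := by
    simp [iteratedConv_zero_add_iteratedConv_one, f]
  have hdiff : iteratedConv f 0 - iteratedConv f 1 = t := by
    rw [iteratedConv_zero_sub_iteratedConv_one]
    refine prod_congr rfl fun i _ ↦ ?_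
    simp only [f, zero_ne_one, ↓reduceIte, tanh_half_log_one_sub_div (hp i)]
    ring
  change Real.log (iteratedConv f 0 / iteratedConv f 1) = Real.log ((1 + t) / (1 - t))
  rw [show 1 + t = 2 * iteratedConv f 0 by linarith, show 1 - t = 2 * iteratedConv f 1 by linarith,
    mul_div_mul_left _ _ two_ne_zero]
end
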